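/- arXiv:1510.02372 — 2 statements merged into one kernel-verified Lean document; each statement's English description precedes it below -/
import Mathlib

section
/- Let P^n be an n-colorable simple n-polytope with 2r vertices and define B_k(P) ⊆ F_2^{2r} as the span of indicator vectors ξ_f of codimension-k faces f. Then B_0(P) ⊆ B_1(P) ⊆ ⋯ ⊆ B_{n-1}(P), B_{n-1}(P) equals the even-weight subspace of F_2^{2r}, and B_n(P) = F_2^{2r}. -/
/-- The even-weight subspace of `𝔽₂^V`: vectors whose coordinates sum to zero. -/
def evenCode (V : Type*) [Fintype V] : Submodule (ZMod 2) (V → ZMod 2) where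
  carrier := { x | ∑ v, x v = 0 }
  add_mem' := by
    intro a b ha hb
    simp only [Set.mem_setOf_eq, Pi.add_apply, Finset.sum_add_distrib] at *
    rw [ha, hb, add_zero]
  zero_mem' := by simp
  smul_mem' := by
    intro c x hx
    simp only [Set.mem_setOf_eq, Pi.smul_apply, smul_eq_mul, ← Finset.mul_sum] at *
    rw [hx, mul_zero]

/-- An abstract (combinatorial) simple `n`-polytope, recorded by its vertex–facet
incidences: each facet is given by its vertex set. Every vertex lies on exactly `n`
facets, whose intersection is that vertex alone; codimension-`(n-1)` faces (edges)
have exactly two vertices; and the 1-skeleton (graph of vertices and edges) is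
connected. -/
structure SimplePolytope (n : ℕ) (V : Type*) [Fintype V] [DecidableEq V] where
  facets : Finset (Finset V)
  facet_nonempty : ∀ F ∈ facets, F.Nonempty
  vertex_facets_card : ∀ v : V, (facets.filter (fun F => v ∈ F)).card = n
  vertex_inf : ∀ v : V, (facets.filter (fun F => v ∈ F)).inf id = {v}
  edge_card : ∀ S ⊆ facets, S.card = n - 1 → (S.inf id).Nonempty → (S.inf id).card = 2
  connected : (SimpleGraph.fromRel (fun v w : V =>
      ∃ S ⊆ facets, S.card = n - 1 ∧ S.inf id = {v, w})).Connected

namespace SimplePolytope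

variable {n : ℕ} {V : Type*} [Fintype V] [DecidableEq V]

/-- `f` is a (nonempty) face of codimension `k`: the intersection of `k` distinct
facets (for `k = 0` the whole vertex set). -/
def IsFace (P : SimplePolytope n V) (k : ℕ) (f : Finset V) : Prop :=
  f.Nonempty ∧ ∃ S ⊆ P.facets, S.card = k ∧ f = S.inf id

/-- The indicator vector `ξ_f ∈ 𝔽₂^V` of a vertex set `f`. -/
def ind (f : Finset V) : V → ZMod 2 := fun v => if v ∈ f then 1 else 0

/-- The codimension-`k` face code `𝔅_k(P)`: the span of the indicator vectors of the
codimension-`k` faces. -/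
def faceCode (P : SimplePolytope n V) (k : ℕ) : Submodule (ZMod 2) (V → ZMod 2) :=
  Submodule.span (ZMod 2) { x | ∃ f, P.IsFace k f ∧ x = ind f }

/-- A proper coloring of the facets: intersecting facets receive distinct colors. -/
def IsProperColoring (P : SimplePolytope n V) (c : Finset V → Fin n) : Prop :=
  ∀ F ∈ P.facets, ∀ G ∈ P.facets, F ≠ G → (F ∩ G).Nonempty → c F ≠ c G

/-- `P` is `n`-colorable. -/
def Colorable (P : SimplePolytope n V) : Prop := ∃ c, P.IsProperColoring c

end SimplePolytope

/-! Every vertex lies on exactly one facet of each colour, so intersecting a codimension-`k`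
face with all facets of a colour it avoids splits its indicator into indicators of
codimension-`(k+1)` faces. The codimension-`(n-1)` faces are the edges, which have even weight
and, by connectivity of the 1-skeleton, generate all of the even-weight code; the
codimension-`n` faces are the single vertices. -/

theorem SimpleGraph.Reachable.sub_mem {V R E : Type*} [Ring R] [AddCommGroup E] [Module R E]
    {G : SimpleGraph V} {v w : V} (h : G.Reachable v w) {M : Submodule R E} (f : V → E)
    (hadj : ∀ ⦃a b⦄, G.Adj a b → f a - f b ∈ M) : f v - f w ∈ M := by
  rw [SimpleGraph.reachable_iff_reflTransGen] at h
  induction h with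
  | refl => simp
  | tail _ hab ih => simpa using M.add_mem ih (hadj hab)

namespace SimplePolytope

variable {n : ℕ} {V : Type*} [DecidableEq V]

theorem ind_empty : ind (∅ : Finset V) = 0 := by
  funext v
  simp [ind]

theorem ind_singleton (v : V) : ind {v} = Pi.single v 1 := by
  funext w
  simp [ind, Pi.single_apply]

theorem ind_pair {v w : V} (h : v ≠ w) : ind {v, w} = ind {v} + ind {w} := by
  funext u
  by_cases hv : u = v <;> by_cases hw : u = w <;> simp_all [ind]

variable [Fintype V]

theorem sum_ind_eq_card (f : Finset V) : ∑ v, ind f v = f.card := by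
  simp [ind]

theorem evenCode_le_of_forall_sub_mem {M : Submodule (ZMod 2) (V → ZMod 2)} (v₀ : V)
    (h : ∀ v, ind {v} - ind {v₀} ∈ M) : evenCode V ≤ M := by
  intro x (hx : ∑ v, x v = 0)
  have hdecomp : x = ∑ v, x v • (ind {v} - ind {v₀}) := by
    simp only [smul_sub, Finset.sum_sub_distrib, ← Finset.sum_smul, hx, zero_smul, sub_zero,
      ind_singleton]
    exact pi_eq_sum_univ' x
  rw [hdecomp]
  exact M.sum_mem fun v _ => M.smul_mem _ (h v)

variable (P : SimplePolytope n V)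

def skeleton : SimpleGraph V :=
  SimpleGraph.fromRel fun v w => ∃ S ⊆ P.facets, S.card = n - 1 ∧ S.inf id = {v, w}

theorem ind_mem_faceCode {k : ℕ} {f : Finset V} (h : P.IsFace k f) : ind f ∈ P.faceCode k :=
  Submodule.subset_span ⟨f, h, rfl⟩

theorem ind_inf_inter_mem_faceCode {S : Finset (Finset V)} {F : Finset V} (hS : S ⊆ P.facets)
    (hF : F ∈ P.facets) (hFS : F ∉ S) : ind (S.inf id ∩ F) ∈ P.faceCode (S.card + 1) := by
  rcases (S.inf id ∩ F).eq_empty_or_nonempty with hempty | hne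
  · rw [hempty, ind_empty]
    exact zero_mem _
  · refine P.ind_mem_faceCode ⟨hne, insert F S, Finset.insert_subset hF hS, ?_, ?_⟩
    · rw [Finset.card_insert_of_notMem hFS]
    · rw [Finset.inf_insert, id_eq, Finset.inter_comm]
      rfl

theorem isFace_singleton (v : V) : P.IsFace n {v} :=
  ⟨Finset.singleton_nonempty v, P.facets.filter (v ∈ ·), Finset.filter_subset _ _,
    P.vertex_facets_card v, (P.vertex_inf v).symm⟩

theorem faceCode_eq_top : P.faceCode n = ⊤ := by
  refine eq_top_iff.2 fun x _ => ?_
  rw [pi_eq_sum_univ' x]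
  refine Submodule.sum_mem _ fun v _ => Submodule.smul_mem _ _ ?_
  rw [← ind_singleton]
  exact P.ind_mem_faceCode (P.isFace_singleton v)

theorem isFace_pair_of_adj {v w : V} (h : P.skeleton.Adj v w) : P.IsFace (n - 1) {v, w} := by
  obtain ⟨-, ⟨S, hS, hcard, hinf⟩ | ⟨S, hS, hcard, hinf⟩⟩ :=
    (SimpleGraph.fromRel_adj _ v w).1 h
  · exact ⟨Finset.insert_nonempty v {w}, S, hS, hcard, hinf.symm⟩
  · exact ⟨Finset.insert_nonempty v {w}, S, hS, hcard, by rw [hinf, Finset.pair_comm]⟩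

theorem faceCode_le_evenCode : P.faceCode (n - 1) ≤ evenCode V := by
  refine Submodule.span_le.2 ?_
  rintro _ ⟨f, ⟨hne, S, hS, hcard, rfl⟩, rfl⟩
  change ∑ v, ind (S.inf id) v = 0
  rw [sum_ind_eq_card, P.edge_card S hS hcard hne]
  rfl

theorem evenCode_le_faceCode : evenCode V ≤ P.faceCode (n - 1) := by
  obtain ⟨v₀⟩ := P.connected.nonempty
  refine evenCode_le_of_forall_sub_mem v₀ fun v => ?_
  have hreach : P.skeleton.Reachable v v₀ := P.connected v v₀
  refine hreach.sub_mem (fun v => ind {v}) fun a b h => ?_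
  rw [ZModModule.sub_eq_add, ← ind_pair h.ne]
  exact P.ind_mem_faceCode (P.isFace_pair_of_adj h)

namespace IsProperColoring

variable {P} {c : Finset V → Fin n} (hc : P.IsProperColoring c)
include hc

theorem card_facets_mem_color_eq_one (v : V) (i : Fin n) :
    ((P.facets.filter (v ∈ ·)).filter (c · = i)).card = 1 := by
  set T := P.facets.filter (v ∈ ·)
  have hinj : Set.InjOn c T := by
    intro F hF G hG hFG
    simp only [T, Finset.coe_filter, Set.mem_ofPred_eq] at hF hG
    by_contra hne
    exact hc F hF.1 G hG.1 hne ⟨v, Finset.mem_inter.2 ⟨hF.2, hG.2⟩⟩ hFG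
  have himage : T.image c = Finset.univ := Finset.eq_univ_of_card _ <| by
    rw [Finset.card_image_of_injOn hinj, P.vertex_facets_card, Fintype.card_fin]
  obtain ⟨F, hF, hFi⟩ := Finset.mem_image.1 (himage ▸ Finset.mem_univ i)
  refine Finset.card_eq_one.2 ⟨F, Finset.eq_singleton_iff_unique_mem.2 ⟨?_, ?_⟩⟩
  · exact Finset.mem_filter.2 ⟨hF, hFi⟩
  · intro G hG
    obtain ⟨hGT, hGi⟩ := Finset.mem_filter.1 hG
    exact hinj hGT hF (hGi.trans hFi.symm)

theorem ind_eq_sum_ind_inter (f : Finset V) (i : Fin n) :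
    ind f = ∑ F ∈ P.facets.filter (c · = i), ind (f ∩ F) := by
  funext v
  by_cases hv : v ∈ f
  · simp only [Finset.sum_apply, ind, Finset.mem_inter, hv, true_and, if_true]
    rw [Finset.sum_boole, Finset.filter_comm, hc.card_facets_mem_color_eq_one v i, Nat.cast_one]
  · simp [ind, hv]

theorem faceCode_le_succ {k : ℕ} (hk : k < n) : P.faceCode k ≤ P.faceCode (k + 1) := by
  refine Submodule.span_le.2 ?_
  rintro _ ⟨_, ⟨-, S, hS, rfl, rfl⟩, rfl⟩
  obtain ⟨i, -, hi⟩ : ∃ i ∈ Finset.univ, i ∉ S.image c :=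
    Finset.exists_mem_notMem_of_card_lt_card <| by
      simpa using Finset.card_image_le.trans_lt hk
  rw [hc.ind_eq_sum_ind_inter _ i]
  refine Submodule.sum_mem _ fun F hF => ?_
  obtain ⟨hFP, rfl⟩ := Finset.mem_filter.1 hF
  exact P.ind_inf_inter_mem_faceCode hS hFP fun hFS => hi (Finset.mem_image_of_mem c hFS)

end IsProperColoring

end SimplePolytope

/-- For an `n`-colorable simple `n`-polytope `P`, the face codes form a chain
`𝔅₀(P) ⊆ 𝔅₁(P) ⊆ ⋯ ⊆ 𝔅_{n-1}(P)`, with `𝔅_{n-1}(P)` equal to the even-weight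
subspace and `𝔅_n(P) = 𝔽₂^{V(P)}`. -/
theorem faceCode_chain_of_colorable {n : ℕ} {V : Type*} [Fintype V] [DecidableEq V]
    (P : SimplePolytope n V) (hcol : P.Colorable) :
    (∀ k : ℕ, k + 1 ≤ n - 1 → P.faceCode k ≤ P.faceCode (k + 1)) ∧
    P.faceCode (n - 1) = evenCode V ∧
    P.faceCode n = ⊤ := by
  obtain ⟨c, hc⟩ := hcol
  exact ⟨fun k hk => hc.faceCode_le_succ (by omega),
    le_antisymm P.faceCode_le_evenCode P.evenCode_le_faceCode, P.faceCode_eq_top⟩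
end

section
/- Every n-dimensional even polytope (n-colorable simple n-polytope) has at least 2^n vertices, with equality if and only if it is combinatorially the n-cube. -/
/-!
Fix a proper coloring and a base vertex `w`, and write `F_j(v)` for the facet of color `j`
through `v`. The `n - 1` facets through `v` other than `F_j(v)` cut out an edge, whose other
end lies on all of them but not on `F_j(v)`. Starting at `w` and crossing the facets of the
colors in `S` one after another therefore reaches a vertex lying on `F_j(w)` exactly for
`j ∉ S`, so `v ↦ (v ∈ F_j(w))_j` maps the vertices onto `{0,1}^n`. With exactly `2^n` vertices
this map is a bijection for every base vertex, so every facet has `2^(n-1)` vertices and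
the facet of color `j` through a vertex outside `F_j(w)` is the complement of `F_j(w)`.
-/

theorem Finset.image_equiv_eq_filter_iff {α β : Type*} [Fintype α] [Fintype β]
    [DecidableEq β] (e : α ≃ β) (s : Finset α) (p : β → Prop) [DecidablePred p] :
    s.image e = univ.filter p ↔ s = univ.filter (fun a => p (e a)) := by
  constructor
  · intro h
    ext a
    simpa using Finset.ext_iff.1 h (e a)
  · rintro rfl
    ext b
    simpa using
      ⟨fun ⟨a, ha, hab⟩ => hab ▸ ha, fun hb => ⟨e.symm b, by simpa using hb⟩⟩

namespace SimplePolytope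

variable {n : ℕ} {V : Type*} [Fintype V] [DecidableEq V] (P : SimplePolytope n V)

def facetsAt (v : V) : Finset (Finset V) := P.facets.filter (fun F => v ∈ F)

variable {P} in
lemma mem_facetsAt {v : V} {F : Finset V} : F ∈ P.facetsAt v ↔ F ∈ P.facets ∧ v ∈ F :=
  Finset.mem_filter

variable {c : Finset V → Fin n}

lemma injOn_color_facetsAt (hc : P.IsProperColoring c) (v : V) :
    Set.InjOn c (P.facetsAt v) := by
  intro F hF G hG hFG
  by_contra hne
  rw [Finset.mem_coe, mem_facetsAt] at hF hG
  exact hc F hF.1 G hG.1 hne ⟨v, Finset.mem_inter.2 ⟨hF.2, hG.2⟩⟩ hFG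

lemma existsUnique_colorFacet (hc : P.IsProperColoring c) (v : V) (i : Fin n) :
    ∃! F, F ∈ P.facetsAt v ∧ c F = i := by
  have himage : (P.facetsAt v).image c = Finset.univ := by
    apply Finset.eq_univ_of_card
    rw [Finset.card_image_of_injOn (P.injOn_color_facetsAt hc v), facetsAt,
      P.vertex_facets_card, Fintype.card_fin]
  obtain ⟨F, hF, rfl⟩ := Finset.mem_image.1 (himage ▸ Finset.mem_univ i)
  exact ⟨F, ⟨hF, rfl⟩, fun G hG => P.injOn_color_facetsAt hc v hG.1 hF hG.2⟩

variable (hc : P.IsProperColoring c)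

noncomputable def colorFacet (v : V) (i : Fin n) : Finset V :=
  Finset.choose (fun F => c F = i) (P.facetsAt v) (P.existsUnique_colorFacet hc v i)

lemma colorFacet_mem_facetsAt (v : V) (i : Fin n) : P.colorFacet hc v i ∈ P.facetsAt v :=
  Finset.choose_mem _ _ _

lemma colorFacet_mem_facets (v : V) (i : Fin n) : P.colorFacet hc v i ∈ P.facets :=
  (mem_facetsAt.1 (P.colorFacet_mem_facetsAt hc v i)).1

lemma self_mem_colorFacet (v : V) (i : Fin n) : v ∈ P.colorFacet hc v i :=
  (mem_facetsAt.1 (P.colorFacet_mem_facetsAt hc v i)).2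

lemma color_colorFacet (v : V) (i : Fin n) : c (P.colorFacet hc v i) = i :=
  Finset.choose_property (fun F => c F = i) _ _

lemma eq_colorFacet {F : Finset V} {v : V} (hF : F ∈ P.facets) (hv : v ∈ F) :
    F = P.colorFacet hc v (c F) :=
  (P.existsUnique_colorFacet hc v (c F)).unique ⟨mem_facetsAt.2 ⟨hF, hv⟩, rfl⟩
    ⟨P.colorFacet_mem_facetsAt hc v _, P.color_colorFacet hc v _⟩

lemma colorFacet_eq_of_mem {u v : V} {i : Fin n} (h : u ∈ P.colorFacet hc v i) :
    P.colorFacet hc v i = P.colorFacet hc u i := by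
  simpa only [P.color_colorFacet] using P.eq_colorFacet hc (P.colorFacet_mem_facets hc v i) h

lemma mem_colorFacet_iff {u v : V} {i : Fin n} :
    u ∈ P.colorFacet hc v i ↔ P.colorFacet hc v i = P.colorFacet hc u i :=
  ⟨P.colorFacet_eq_of_mem hc, fun h => h ▸ P.self_mem_colorFacet hc u i⟩

lemma exists_notMem_colorFacet_mem_colorFacet_of_ne (v : V) (i : Fin n) :
    ∃ u, u ∉ P.colorFacet hc v i ∧ ∀ j ≠ i, u ∈ P.colorFacet hc v j := by
  set S := (P.facetsAt v).erase (P.colorFacet hc v i)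
  have hS : S ⊆ P.facets := fun F hF => (mem_facetsAt.1 (Finset.mem_of_mem_erase hF)).1
  have hScard : S.card = n - 1 := by
    rw [Finset.card_erase_of_mem (P.colorFacet_mem_facetsAt hc v i), facetsAt,
      P.vertex_facets_card]
  have hvS : v ∈ S.inf id :=
    Finset.mem_inf.2 fun F hF => (mem_facetsAt.1 (Finset.mem_of_mem_erase hF)).2
  obtain ⟨u, huS, huv⟩ := Finset.exists_mem_ne
    (by rw [P.edge_card S hS hScard ⟨v, hvS⟩]; norm_num) v
  have huS' : ∀ F ∈ S, u ∈ F := fun F hF => Finset.mem_inf.1 huS F hF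
  refine ⟨u, fun hui => huv ?_, fun j hji => huS' _ (Finset.mem_erase.2 ⟨?_, ?_⟩)⟩
  · have : u ∈ (P.facetsAt v).inf id := Finset.mem_inf.2 fun F hF => by
      by_cases hFi : F = P.colorFacet hc v i
      · exact hFi ▸ hui
      · exact huS' F (Finset.mem_erase.2 ⟨hFi, hF⟩)
    rwa [facetsAt, P.vertex_inf, Finset.mem_singleton] at this
  · intro h
    exact hji (by simpa only [P.color_colorFacet] using congrArg c h)
  · exact P.colorFacet_mem_facetsAt hc v j

lemma exists_mem_colorFacet_iff_notMem (w : V) (S : Finset (Fin n)) :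
    ∃ v, ∀ j, v ∈ P.colorFacet hc w j ↔ j ∉ S := by
  induction S using Finset.induction_on with
  | empty => exact ⟨w, fun j => by simp [P.self_mem_colorFacet hc]⟩
  | @insert i S hiS ih =>
    obtain ⟨v, hv⟩ := ih
    obtain ⟨u, hui, huj⟩ := P.exists_notMem_colorFacet_mem_colorFacet_of_ne hc v i
    refine ⟨u, fun j => ?_⟩
    rcases eq_or_ne j i with rfl | hji
    · simpa [P.colorFacet_eq_of_mem hc ((hv j).2 hiS)] using hui
    · rw [Finset.mem_insert, not_or, ← hv j, P.mem_colorFacet_iff hc, P.mem_colorFacet_iff hc,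
        ← P.colorFacet_eq_of_mem hc (huj j hji)]
      simp [hji]

noncomputable def pattern (w v : V) : Fin n → Bool := fun j => decide (v ∈ P.colorFacet hc w j)

lemma pattern_surjective (w : V) : Function.Surjective (P.pattern hc w) := by
  intro x
  obtain ⟨v, hv⟩ := P.exists_mem_colorFacet_iff_notMem hc w (Finset.univ.filter (x · = false))
  exact ⟨v, funext fun j => by simp [pattern, hv]⟩

theorem two_pow_le_card_of_colorable (hcol : P.Colorable) : 2 ^ n ≤ Fintype.card V := by
  obtain ⟨c, hc⟩ := hcol
  obtain ⟨w⟩ := P.connected.nonempty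
  simpa using Fintype.card_le_of_surjective _ (P.pattern_surjective hc w)

lemma pattern_bijective (hcard : Fintype.card V = 2 ^ n) (w : V) :
    Function.Bijective (P.pattern hc w) :=
  (Fintype.bijective_iff_surjective_and_card _).2 ⟨P.pattern_surjective hc w, by simp [hcard]⟩

lemma card_colorFacet (hcard : Fintype.card V = 2 ^ n) (w : V) (i : Fin n) :
    (P.colorFacet hc w i).card = 2 ^ (n - 1) := by
  let e := Equiv.ofBijective _ (P.pattern_bijective hc hcard w)
  have himage : (P.colorFacet hc w i).image e = Finset.univ.filter (· i = true) :=
    (Finset.image_equiv_eq_filter_iff e _ _).2 (by ext; simp [e, pattern])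
  rw [← Finset.card_image_of_injective _ e.injective, himage]
  simpa only [Fintype.piFinset_univ, Finset.card_univ, Fintype.card_bool, Fintype.card_fin] using
    Fintype.card_filter_piFinset_const_eq_of_mem Finset.univ i (Finset.mem_univ true)

lemma colorFacet_eq_compl (hcard : Fintype.card V = 2 ^ n) {v w : V} {i : Fin n}
    (hv : v ∉ P.colorFacet hc w i) : P.colorFacet hc v i = (P.colorFacet hc w i)ᶜ := by
  refine Finset.eq_of_subset_of_card_le (fun u hu => Finset.mem_compl.2 fun huw => hv ?_) ?_
  · rw [P.mem_colorFacet_iff hc] at hu huw ⊢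
    rw [huw, hu]
  · obtain ⟨m, rfl⟩ := Nat.exists_eq_add_of_lt i.pos
    rw [Finset.card_compl, P.card_colorFacet hc hcard, P.card_colorFacet hc hcard, hcard]
    simp only [Nat.add_sub_cancel, pow_succ]
    omega

lemma colorFacet_eq_filter_pattern (hcard : Fintype.card V = 2 ^ n) (w v : V) (i : Fin n) :
    P.colorFacet hc v i =
      Finset.univ.filter (fun u => P.pattern hc w u i = P.pattern hc w v i) := by
  by_cases hv : v ∈ P.colorFacet hc w i
  · rw [← P.colorFacet_eq_of_mem hc hv]
    ext u
    simp [pattern, hv]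
  · rw [P.colorFacet_eq_compl hc hcard hv]
    ext u
    simp [pattern, hv]

lemma mem_facets_iff_of_card_eq (hcard : Fintype.card V = 2 ^ n) (w : V) (F : Finset V) :
    F ∈ P.facets ↔ ∃ i b, F = Finset.univ.filter (fun u => P.pattern hc w u i = b) := by
  constructor
  · intro hF
    obtain ⟨v, hv⟩ := P.facet_nonempty F hF
    exact ⟨c F, _,
      (P.eq_colorFacet hc hF hv).trans (P.colorFacet_eq_filter_pattern hc hcard w v _)⟩
  · rintro ⟨i, b, rfl⟩
    obtain ⟨v, hv⟩ := P.pattern_surjective hc w (fun _ => b)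
    have hvi : P.pattern hc w v i = b := congrFun hv i
    rw [← hvi, ← P.colorFacet_eq_filter_pattern hc hcard w v i]
    exact P.colorFacet_mem_facets hc v i

end SimplePolytope

/-- Every `n`-dimensional even polytope (`n`-colorable simple `n`-polytope) has at
least `2^n` vertices, with equality if and only if it is combinatorially the `n`-cube
(there is a vertex bijection with `{0,1}^n` matching facets with the cube's facets). -/
theorem even_polytope_card_ge_two_pow {n : ℕ} {V : Type*} [Fintype V] [DecidableEq V]
    (P : SimplePolytope n V) (hcol : P.Colorable) :
    2 ^ n ≤ Fintype.card V ∧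
    (Fintype.card V = 2 ^ n ↔
      ∃ e : V ≃ (Fin n → Bool), ∀ F : Finset V,
        F ∈ P.facets ↔ ∃ (i : Fin n) (b : Bool),
          F.image e = Finset.univ.filter (fun x => x i = b)) := by
  refine ⟨P.two_pow_le_card_of_colorable hcol, fun hcard => ?_,
    fun ⟨e, _⟩ => by simp [Fintype.card_congr e]⟩
  obtain ⟨c, hc⟩ := hcol
  obtain ⟨w⟩ := P.connected.nonempty
  let e := Equiv.ofBijective _ (P.pattern_bijective hc hcard w)
  refine ⟨e, fun F => ?_⟩
  simp only [Finset.image_equiv_eq_filter_iff]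
  exact P.mem_facets_iff_of_card_eq hc hcard w F
end
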